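/- arXiv:1204.5834 — 5 statements merged into one kernel-verified Lean document; each statement's English description precedes it below -/
import Mathlib

section
/- Let N ≥ 1 be an integer, let 0 < p < 1, let 0 < ε < 1, and set μ = Np. Let Δ be any real number with Δ ≥ sqrt(4·N·max{p, (4/N)·ln(2/ε)}·ln(2/ε)). Then the binomial tail satisfies ∑_{k = 0,…,N with |k − μ| > Δ} B(k; N, p) < ε. -/
/-!
Chernoff's method. Bounding the indicator of `{t k ≥ c}` by `exp (t k - c)` and summing against
the binomial weights gives `exp (-c) (p eᵗ + 1 - p)ᴺ ≤ exp (N p (eᵗ - 1) - c)`. Centring at `μ = N p`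
and using `eᵗ - 1 - t ≤ 3/4 t²` for `|t| ≤ 1`, each tail `{±(k - μ) > Δ}` has mass at most
`exp (3/4 μ t² - t Δ)`. The two conditions packed into the hypothesis on `Δ`, namely
`4 μ L ≤ Δ²` and `4 L ≤ Δ` with `L = log (2/ε)`, are exactly what is needed to find `t ∈ [0, 1]`
making this exponent `< -L`, so each tail is `< ε/2`.
-/

open Finset Real

lemma Real.exp_sub_one_sub_le_of_abs_le_one {s : ℝ} (hs : |s| ≤ 1) :
    exp s - 1 - s ≤ 3 / 4 * s ^ 2 := by
  have h := (abs_le.mp (Real.exp_bound hs (n := 2) two_pos)).2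
  norm_num [Finset.sum_range_succ, Nat.factorial, sq_abs] at h
  linarith

section Binomial

variable {N : ℕ} {p : ℝ}

lemma binomial_weight_nonneg (hp0 : 0 ≤ p) (hp1 : p ≤ 1) (k : ℕ) :
    0 ≤ (N.choose k : ℝ) * p ^ k * (1 - p) ^ (N - k) := by
  have : 0 ≤ 1 - p := by linarith
  positivity

lemma sum_exp_mul_binomial_weight (t : ℝ) :
    ∑ k ∈ range (N + 1), exp (t * k) * ((N.choose k : ℝ) * p ^ k * (1 - p) ^ (N - k)) =
      (p * exp t + (1 - p)) ^ N := by
  rw [add_pow]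
  refine sum_congr rfl fun k _ => ?_
  rw [mul_comm t, exp_nat_mul, mul_pow]
  ring

lemma binomial_mgf_le_exp (hp0 : 0 ≤ p) (hp1 : p ≤ 1) (t : ℝ) :
    (p * exp t + (1 - p)) ^ N ≤ exp (N * p * (exp t - 1)) := by
  have hbase : 0 ≤ p * exp t + (1 - p) := by nlinarith [exp_nonneg t]
  calc (p * exp t + (1 - p)) ^ N ≤ exp (p * (exp t - 1)) ^ N := by
        gcongr
        linarith [add_one_le_exp (p * (exp t - 1))]
    _ = exp (N * p * (exp t - 1)) := by rw [← exp_nat_mul, mul_assoc]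

lemma sum_binomial_weight_le_exp_of_le_mul (hp0 : 0 ≤ p) (hp1 : p ≤ 1) {F : Finset ℕ}
    (hF : F ⊆ range (N + 1)) {t c : ℝ} (hc : ∀ k ∈ F, c ≤ t * k) :
    ∑ k ∈ F, (N.choose k : ℝ) * p ^ k * (1 - p) ^ (N - k) ≤ exp (N * p * (exp t - 1) - c) := by
  calc ∑ k ∈ F, (N.choose k : ℝ) * p ^ k * (1 - p) ^ (N - k)
      ≤ ∑ k ∈ F, exp (t * k - c) * ((N.choose k : ℝ) * p ^ k * (1 - p) ^ (N - k)) := by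
        refine sum_le_sum fun k hk => ?_
        exact le_mul_of_one_le_left (binomial_weight_nonneg hp0 hp1 k)
          (one_le_exp (sub_nonneg.mpr (hc k hk)))
    _ ≤ ∑ k ∈ range (N + 1), exp (t * k - c) * ((N.choose k : ℝ) * p ^ k * (1 - p) ^ (N - k)) :=
        sum_le_sum_of_subset_of_nonneg hF fun k _ _ =>
          mul_nonneg (exp_nonneg _) (binomial_weight_nonneg hp0 hp1 k)
    _ = exp (-c) * (p * exp t + (1 - p)) ^ N := by
        simp_rw [sub_eq_add_neg _ c, exp_add, mul_right_comm _ (exp (-c)), ← sum_mul,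
          sum_exp_mul_binomial_weight, mul_comm]
    _ ≤ exp (-c) * exp (N * p * (exp t - 1)) := by gcongr; exact binomial_mgf_le_exp hp0 hp1 t
    _ = exp (N * p * (exp t - 1) - c) := by rw [← exp_add]; ring_nf

lemma binomial_tail_le_exp_of_abs_le_one (hp0 : 0 ≤ p) (hp1 : p ≤ 1) {F : Finset ℕ}
    (hF : F ⊆ range (N + 1)) {t Δ : ℝ} (ht : |t| ≤ 1)
    (hk : ∀ k ∈ F, |t| * Δ ≤ t * (k - N * p)) :
    ∑ k ∈ F, (N.choose k : ℝ) * p ^ k * (1 - p) ^ (N - k) ≤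
      exp (3 / 4 * (N * p) * t ^ 2 - |t| * Δ) := by
  refine (sum_binomial_weight_le_exp_of_le_mul hp0 hp1 hF (t := t) (c := t * (N * p) + |t| * Δ)
    fun k hkF => by linarith [mul_sub t k (N * p), hk k hkF]).trans (exp_le_exp.mpr ?_)
  have hNp : 0 ≤ N * p := by positivity
  nlinarith [mul_le_mul_of_nonneg_left (exp_sub_one_sub_le_of_abs_le_one ht) hNp]

end Binomial

lemma exists_mem_Icc_quadratic_lt {a L Δ : ℝ} (ha : 0 < a) (hL : 0 < L)
    (h₁ : 4 * a * L ≤ Δ ^ 2) (h₂ : 4 * L ≤ Δ) :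
    ∃ t ∈ Set.Icc (0 : ℝ) 1, 3 / 4 * a * t ^ 2 - t * Δ < -L := by
  have hΔ : 0 < Δ := by linarith
  by_cases hΔa : 2 * Δ ≤ 3 * a
  · -- the unconstrained minimiser `t = 2Δ / 3a` lies in `[0, 1]`, with value `-Δ² / 3a`
    refine ⟨2 * Δ / (3 * a), ⟨by positivity, (div_le_one (by positivity)).mpr hΔa⟩, ?_⟩
    have hval : 3 / 4 * a * (2 * Δ / (3 * a)) ^ 2 - 2 * Δ / (3 * a) * Δ = -(Δ ^ 2 / (3 * a)) := by
      field_simp; ring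
    rw [hval, neg_lt_neg_iff, lt_div_iff₀ (by positivity)]
    nlinarith
  · exact ⟨1, Set.right_mem_Icc.mpr zero_le_one, by nlinarith⟩

lemma le_sq_and_le_of_sqrt_max_le {N p L Δ : ℝ} (hN : 0 < N) (hL : 0 ≤ L)
    (h : √(4 * N * max p (4 / N * L) * L) ≤ Δ) : 4 * (N * p) * L ≤ Δ ^ 2 ∧ 4 * L ≤ Δ := by
  obtain ⟨hΔ, hsq⟩ := sqrt_le_iff.mp h
  constructor
  · nlinarith [mul_le_mul_of_nonneg_right (le_max_left p (4 / N * L))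
      (by positivity : 0 ≤ 4 * N * L)]
  · have h16 : (4 * L) ^ 2 ≤ Δ ^ 2 := by
      have hmax := mul_le_mul_of_nonneg_right (le_max_right p (4 / N * L))
        (by positivity : 0 ≤ 4 * N * L)
      have hcancel : 4 / N * L * (4 * N * L) = (4 * L) ^ 2 := by field_simp
      nlinarith
    exact (pow_le_pow_iff_left₀ (by positivity) hΔ two_ne_zero).mp h16

/-- Let `N ≥ 1` be an integer, `0 < p < 1`, `0 < ε < 1`, and set `μ = N·p`.
If `Δ ≥ sqrt(4·N·max{p, (4/N)·ln(2/ε)}·ln(2/ε))`, then the binomial tail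
`∑_{k ≤ N, |k - μ| > Δ} B(k; N, p)` is less than `ε`, where
`B(k; N, p) = C(N,k)·p^k·(1-p)^(N-k)`. -/
theorem binomial_tail_lt_of_sqrt_le_delta
    (N : ℕ) (hN : 1 ≤ N) (p ε Δ : ℝ)
    (hp0 : 0 < p) (hp1 : p < 1) (hε0 : 0 < ε) (hε1 : ε < 1)
    (hΔ : Real.sqrt (4 * N * max p (4 / N * Real.log (2 / ε)) * Real.log (2 / ε)) ≤ Δ) :
    ∑ k ∈ (Finset.range (N + 1)).filter (fun k : ℕ => Δ < |(k : ℝ) - N * p|),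
      (N.choose k : ℝ) * p ^ k * (1 - p) ^ (N - k) < ε := by
  set L := log (2 / ε)
  have hL : 0 < L := log_pos (by rw [lt_div_iff₀ hε0]; linarith)
  have hN0 : (0 : ℝ) < N := by exact_mod_cast hN
  obtain ⟨h₁, h₂⟩ := le_sq_and_le_of_sqrt_max_le hN0 hL.le hΔ
  obtain ⟨t, ⟨ht0, ht1⟩, htL⟩ := exists_mem_Icc_quadratic_lt (by positivity) hL h₁ h₂
  have hexpL : exp (-L) = ε / 2 := by
    rw [← log_inv, exp_log (by positivity), inv_div]
  have tail {s : ℝ} (hs : |s| = t) (F : Finset ℕ) (hF : F ⊆ range (N + 1))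
      (hk : ∀ k ∈ F, t * Δ ≤ s * (k - N * p)) :
      ∑ k ∈ F, (N.choose k : ℝ) * p ^ k * (1 - p) ^ (N - k) < ε / 2 := by
    refine (binomial_tail_le_exp_of_abs_le_one hp0.le hp1.le hF (Δ := Δ) (hs ▸ ht1)
      ?_).trans_lt ?_
    · simpa only [hs] using hk
    · rw [← hexpL, exp_lt_exp, ← sq_abs, hs]; linarith
  simp_rw [lt_abs, filter_or]
  rw [sum_union (disjoint_filter.mpr fun k _ h h' => by linarith), ← add_halves ε]
  refine add_lt_add (tail (abs_of_nonneg ht0) _ (filter_subset _ _) fun k hk => ?_)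
    (tail (s := -t) (by rw [abs_neg, abs_of_nonneg ht0]) _ (filter_subset _ _) fun k hk => ?_)
  · exact mul_le_mul_of_nonneg_left (mem_filter.mp hk).2.le ht0
  · rw [neg_mul_comm]; exact mul_le_mul_of_nonneg_left (mem_filter.mp hk).2.le ht0
end

section
/- Let N ≥ 1 be an integer, let 0 < p < 1, set μ = Np, and let 0 < δ < 1. Then ∑_{k = 0,…,N with |k − μ| > δμ} B(k; N, p) < 2·exp(−δ²μ/4). -/
/-!
Exponential moments (Chernoff's method). By Markov's inequality applied to `exp (t k)`, a tail
`{k | a ≤ t k}` of the binomial distribution has mass at most `exp (-a) (1 - p + p eᵗ)ᴺ`, and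
`1 - p + p eᵗ < exp (p (eᵗ - 1))`. Taking `t = ± δ` and using `eᵗ ≤ 1 + t + 3t²/4` for `|t| ≤ 1`,
each of the two tails has mass less than `exp (-δ² N p / 4)`.
-/

open Finset Real

noncomputable def binomialWeight (N : ℕ) (p : ℝ) (k : ℕ) : ℝ :=
  N.choose k * p ^ k * (1 - p) ^ (N - k)

lemma binomialWeight_nonneg (N : ℕ) {p : ℝ} (hp0 : 0 ≤ p) (hp1 : p ≤ 1) (k : ℕ) :
    0 ≤ binomialWeight N p k := by
  have : 0 ≤ 1 - p := sub_nonneg.2 hp1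
  unfold binomialWeight
  positivity

lemma sum_exp_mul_binomialWeight (N : ℕ) (p t : ℝ) :
    ∑ k ∈ range (N + 1), exp (t * k) * binomialWeight N p k = (1 - p + p * exp t) ^ N := by
  rw [add_comm (1 - p), add_pow]
  refine sum_congr rfl fun k _ => ?_
  rw [binomialWeight, mul_pow, mul_comm t, exp_nat_mul]
  ring

lemma sum_filter_binomialWeight_le {N : ℕ} {p : ℝ} (hp0 : 0 ≤ p) (hp1 : p ≤ 1) {t a : ℝ}
    {P : ℕ → Prop} [DecidablePred P] (hP : ∀ k, P k → a ≤ t * k) :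
    ∑ k ∈ (range (N + 1)).filter P, binomialWeight N p k ≤ exp (-a) * (1 - p + p * exp t) ^ N := by
  have hB := binomialWeight_nonneg N hp0 hp1
  calc ∑ k ∈ (range (N + 1)).filter P, binomialWeight N p k
      ≤ ∑ k ∈ (range (N + 1)).filter P, exp (t * k - a) * binomialWeight N p k := by
        refine sum_le_sum fun k hk => le_mul_of_one_le_left (hB k) ?_
        exact one_le_exp (sub_nonneg.2 (hP k (mem_filter.1 hk).2))
    _ ≤ ∑ k ∈ range (N + 1), exp (t * k - a) * binomialWeight N p k :=
        sum_le_sum_of_subset_of_nonneg (filter_subset _ _) fun k _ _ => by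
          have := hB k
          positivity
    _ = exp (-a) * (1 - p + p * exp t) ^ N := by
        simp_rw [← sum_exp_mul_binomialWeight, mul_sum, ← mul_assoc, ← exp_add, neg_add_eq_sub]

lemma binomial_mgf_lt {N : ℕ} (hN : 1 ≤ N) {p : ℝ} (hp0 : 0 < p) (hp1 : p ≤ 1) {t : ℝ}
    (ht : t ≠ 0) : (1 - p + p * exp t) ^ N < exp (N * p * (exp t - 1)) := by
  have hbase_pos : 0 < 1 - p + p * exp t := by nlinarith [exp_pos t]
  have hbase_lt : 1 - p + p * exp t < exp (p * (exp t - 1)) := by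
    have hne : p * (exp t - 1) ≠ 0 :=
      mul_ne_zero hp0.ne' (sub_ne_zero.2 fun h => ht (exp_eq_one_iff t |>.1 h))
    linarith [add_one_lt_exp hne]
  calc (1 - p + p * exp t) ^ N < exp (p * (exp t - 1)) ^ N :=
        pow_lt_pow_left₀ hbase_lt hbase_pos.le (by omega)
    _ = exp (N * p * (exp t - 1)) := by rw [← exp_nat_mul, mul_assoc]

lemma exp_le_one_add_add_three_quarters_mul_sq {x : ℝ} (hx : |x| ≤ 1) :
    exp x ≤ 1 + x + 3 / 4 * x ^ 2 := by
  have h := exp_bound hx (n := 2) two_pos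
  norm_num [sum_range_succ, Nat.factorial, sq_abs] at h
  linarith [(abs_le.1 h).2]

/-- With `μ = N p`, the condition on `P` reads `k ≥ (1 + δ) μ` for `s = δ` and `k ≤ (1 - δ) μ` for
`s = -δ`. -/
lemma sum_filter_binomialWeight_lt {N : ℕ} (hN : 1 ≤ N) {p : ℝ} (hp0 : 0 < p) (hp1 : p ≤ 1)
    {s : ℝ} (hs0 : s ≠ 0) (hs1 : |s| ≤ 1) {P : ℕ → Prop} [DecidablePred P]
    (hP : ∀ k, P k → s * (1 + s) * (N * p) ≤ s * k) :
    ∑ k ∈ (range (N + 1)).filter P, binomialWeight N p k < exp (-(s ^ 2 * (N * p)) / 4) := by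
  have hμ : 0 ≤ N * p := by positivity
  calc ∑ k ∈ (range (N + 1)).filter P, binomialWeight N p k
      ≤ exp (-(s * (1 + s) * (N * p))) * (1 - p + p * exp s) ^ N :=
        sum_filter_binomialWeight_le hp0.le hp1 hP
    _ < exp (-(s * (1 + s) * (N * p))) * exp (N * p * (exp s - 1)) :=
        mul_lt_mul_of_pos_left (binomial_mgf_lt hN hp0 hp1 hs0) (exp_pos _)
    _ ≤ exp (-(s ^ 2 * (N * p)) / 4) := by
        rw [← exp_add, exp_le_exp]
        nlinarith [exp_le_one_add_add_three_quarters_mul_sq hs1]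

/-- Let `N ≥ 1` be an integer, `0 < p < 1`, set `μ = N·p`, and let `0 < δ < 1`.
Then `∑_{k ≤ N, |k - μ| > δ·μ} B(k; N, p) < 2·exp(-δ²·μ/4)`, where
`B(k; N, p) = C(N,k)·p^k·(1-p)^(N-k)`. -/
theorem binomial_chernoff_two_sided
    (N : ℕ) (hN : 1 ≤ N) (p δ : ℝ)
    (hp0 : 0 < p) (hp1 : p < 1) (hδ0 : 0 < δ) (hδ1 : δ < 1) :
    ∑ k ∈ (Finset.range (N + 1)).filter (fun k : ℕ => δ * (N * p) < |(k : ℝ) - N * p|),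
      (N.choose k : ℝ) * p ^ k * (1 - p) ^ (N - k)
      < 2 * Real.exp (-(δ ^ 2 * (N * p)) / 4) := by
  set μ : ℝ := N * p
  have hδμ : 0 < δ * μ := by positivity
  have hδ : |δ| ≤ 1 := by rw [abs_of_pos hδ0]; exact hδ1.le
  have hsplit : (range (N + 1)).filter (fun k : ℕ => δ * μ < |(k : ℝ) - μ|)
      = (range (N + 1)).filter (fun k : ℕ => δ * μ < k - μ)
        ∪ (range (N + 1)).filter (fun k : ℕ => δ * μ < μ - k) := by
    rw [← filter_or]
    exact filter_congr fun k _ => by rw [lt_abs, neg_sub]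
  have hdisj : Disjoint ((range (N + 1)).filter (fun k : ℕ => δ * μ < k - μ))
      ((range (N + 1)).filter (fun k : ℕ => δ * μ < μ - k)) :=
    disjoint_filter.2 fun k _ h₁ h₂ => by linarith
  have hupper := sum_filter_binomialWeight_lt hN hp0 hp1.le hδ0.ne' hδ
    (P := fun k : ℕ => δ * μ < k - μ) fun k hk => by nlinarith
  have hlower := sum_filter_binomialWeight_lt hN hp0 hp1.le (neg_ne_zero.2 hδ0.ne')
    (by rwa [abs_neg]) (P := fun k : ℕ => δ * μ < μ - k) fun k hk => by nlinarith
  rw [neg_sq] at hlower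
  rw [hsplit, sum_union hdisj]
  exact (add_lt_add hupper hlower).trans_eq (two_mul _).symm
end

section
/- Let N ≥ 1 be an integer, 0 < p < 1, and let μ̄, Δ⁻, Δ⁺, I, α⁺, α⁻ be as defined, with 0 ≤ μ̄ − Δ⁻ and μ̄ + Δ⁺ ≤ N. Define the transition probabilities on I by P(k, k+1) = α⁺(k)/4, P(k, k−1) = α⁻(k)/4, P(k, k) = 1 − α⁺(k)/4 − α⁻(k)/4, and P(j, k) = 0 whenever |j − k| > 1. Then the detailed balance conditions hold with respect to the binomial weights: for all j, k ∈ I, B(j; N, p)·P(j, k) = B(k; N, p)·P(k, j). -/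
/-- Binomial probability mass function `B(k; N, p) = C(N,k)·p^k·(1-p)^(N-k)`. -/
noncomputable def binomialPMF (N : ℕ) (p : ℝ) (k : ℕ) : ℝ :=
  (N.choose k : ℝ) * p ^ k * (1 - p) ^ (N - k)

/-- The Metropolis acceptance function `α⁺`. -/
noncomputable def alphaPlus (N : ℕ) (p : ℝ) (μbar Δp : ℕ) (k : ℕ) : ℝ :=
  if k < μbar then 1
  else if k < μbar + Δp then ((N : ℝ) - k) / ((k : ℝ) + 1) * (p / (1 - p))
  else 0

/-- The Metropolis acceptance function `α⁻`. -/
noncomputable def alphaMinus (N : ℕ) (p : ℝ) (μbar Δm : ℕ) (k : ℕ) : ℝ :=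
  if μbar < k then 1
  else if μbar - Δm < k then (k : ℝ) / ((N : ℝ) - k + 1) * ((1 - p) / p)
  else 0

/-- The transition probabilities of the Metropolis chain on `I = [μ̄ - Δ⁻, μ̄ + Δ⁺]`:
`P(k, k+1) = α⁺(k)/4`, `P(k, k-1) = α⁻(k)/4`, `P(k, k) = 1 - α⁺(k)/4 - α⁻(k)/4`,
and `P(j, k) = 0` whenever `|j - k| > 1`. -/
noncomputable def metropolisTrans (N : ℕ) (p : ℝ) (μbar Δm Δp : ℕ) (j k : ℕ) : ℝ :=
  if k = j + 1 then alphaPlus N p μbar Δp j / 4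
  else if j = k + 1 then alphaMinus N p μbar Δm j / 4
  else if j = k then 1 - alphaPlus N p μbar Δp j / 4 - alphaMinus N p μbar Δm j / 4
  else 0


/- Detailed balance only has to be checked on the edges `{j, j + 1}` of the path `I`. There the
Metropolis rule accepts the move towards `μ̄` with probability one and the move away from `μ̄` with
the ratio of binomial weights, and `B(j + 1) / B(j) = (N - j) / (j + 1) · p / (1 - p)` makes the two
probability flows across the edge equal. -/

theorem binomialPMF_succ {N j : ℕ} (hj : j < N) {p : ℝ} (hp : p ≠ 1) :
    binomialPMF N p (j + 1) =
      binomialPMF N p j * (((N : ℝ) - j) / ((j : ℝ) + 1) * (p / (1 - p))) := by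
  have hq : 1 - p ≠ 0 := sub_ne_zero.mpr hp.symm
  have hchoose : (N.choose (j + 1) : ℝ) * ((j : ℝ) + 1) = N.choose j * ((N : ℝ) - j) := by
    rw [← Nat.cast_sub hj.le]
    exact_mod_cast Nat.choose_succ_right_eq N j
  rw [binomialPMF, binomialPMF, show N - j = N - (j + 1) + 1 by omega, pow_succ, pow_succ]
  field_simp
  linear_combination p ^ j * p * hchoose

theorem binomialPMF_succ_mul_ratio {N j : ℕ} (hj : j < N) {p : ℝ} (hp0 : p ≠ 0) (hp1 : p ≠ 1) :
    binomialPMF N p (j + 1) *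
        (((j + 1 : ℕ) : ℝ) / ((N : ℝ) - (j + 1 : ℕ) + 1) * ((1 - p) / p)) =
      binomialPMF N p j := by
  have hq : 1 - p ≠ 0 := sub_ne_zero.mpr hp1.symm
  have hNj : (N : ℝ) - j ≠ 0 := sub_ne_zero.mpr (by exact_mod_cast hj.ne')
  rw [binomialPMF_succ hj hp1, Nat.cast_succ, show (N : ℝ) - (j + 1) + 1 = N - j by ring]
  field_simp

section Metropolis

variable {N : ℕ} {p : ℝ} {μbar Δm Δp : ℕ}

theorem binomialPMF_mul_alphaPlus (hp0 : p ≠ 0) (hp1 : p ≠ 1) (hΔp : μbar + Δp ≤ N) {j : ℕ}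
    (hj : μbar - Δm ≤ j) (hj' : j + 1 ≤ μbar + Δp) :
    binomialPMF N p j * alphaPlus N p μbar Δp j =
      binomialPMF N p (j + 1) * alphaMinus N p μbar Δm (j + 1) := by
  have hjN : j < N := by omega
  by_cases hjμ : j < μbar
  · rw [alphaPlus, if_pos hjμ, alphaMinus, if_neg (by omega), if_pos (by omega), mul_one,
      binomialPMF_succ_mul_ratio hjN hp0 hp1]
  · rw [alphaPlus, if_neg hjμ, if_pos (by omega), alphaMinus, if_pos (by omega), mul_one,
      binomialPMF_succ hjN hp1]

theorem metropolisTrans_self_succ (j : ℕ) :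
    metropolisTrans N p μbar Δm Δp j (j + 1) = alphaPlus N p μbar Δp j / 4 := by
  simp [metropolisTrans]

theorem metropolisTrans_succ_self (j : ℕ) :
    metropolisTrans N p μbar Δm Δp (j + 1) j = alphaMinus N p μbar Δm (j + 1) / 4 := by
  rw [metropolisTrans, if_neg (by omega), if_pos rfl]

theorem metropolisTrans_eq_zero_of_add_two_le {j k : ℕ} (h : j + 2 ≤ k ∨ k + 2 ≤ j) :
    metropolisTrans N p μbar Δm Δp j k = 0 := by
  rw [metropolisTrans, if_neg (by omega), if_neg (by omega), if_neg (by omega)]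

end Metropolis

theorem metropolis_detailed_balance_general
    (N : ℕ) (p : ℝ) (hp0 : 0 < p) (hp1 : p < 1)
    (μbar Δm Δp : ℕ)
    (hΔp : μbar + Δp ≤ N) :
    ∀ j k : ℕ, μbar - Δm ≤ j → j ≤ μbar + Δp → μbar - Δm ≤ k → k ≤ μbar + Δp →
      binomialPMF N p j * metropolisTrans N p μbar Δm Δp j k =
        binomialPMF N p k * metropolisTrans N p μbar Δm Δp k j := by
  intro j k hj hj' hk hk'
  wlog hjk : j ≤ k generalizing j k
  · exact (this k j hk hk' hj hj' (by omega)).symm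
  obtain rfl | rfl | hfar : k = j ∨ k = j + 1 ∨ j + 2 ≤ k := by omega
  · rfl
  · rw [metropolisTrans_self_succ, metropolisTrans_succ_self, mul_div_assoc', mul_div_assoc',
      binomialPMF_mul_alphaPlus hp0.ne' hp1.ne hΔp hj hk']
  · rw [metropolisTrans_eq_zero_of_add_two_le (.inl hfar),
      metropolisTrans_eq_zero_of_add_two_le (.inr hfar), mul_zero, mul_zero]

/-- Detailed balance of the Metropolis chain with respect to the
binomial weights: for all `j, k ∈ I`, `B(j; N, p)·P(j, k) = B(k; N, p)·P(k, j)`. -/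
theorem metropolis_detailed_balance
    (N : ℕ) (hN : 1 ≤ N) (p : ℝ) (hp0 : 0 < p) (hp1 : p < 1)
    (μbar Δm Δp : ℕ)
    (hμbar : μbar =
      if (N : ℝ) * p - ⌊(N : ℝ) * p⌋₊ ≤ 1 - p then ⌊(N : ℝ) * p⌋₊ else ⌈(N : ℝ) * p⌉₊)
    (hΔm : Δm ≤ μbar) (hΔp : μbar + Δp ≤ N) :
    ∀ j k : ℕ, μbar - Δm ≤ j → j ≤ μbar + Δp → μbar - Δm ≤ k → k ≤ μbar + Δp →
      binomialPMF N p j * metropolisTrans N p μbar Δm Δp j k =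
        binomialPMF N p k * metropolisTrans N p μbar Δm Δp k j :=
  metropolis_detailed_balance_general N p hp0 hp1 μbar Δm Δp hΔp
end

section
/- Let N ≥ 1 be an integer, 0 < p < 1, and let μ̄, Δ⁻, Δ⁺, I, α⁺, α⁻ be as defined, with 0 ≤ μ̄ − Δ⁻ and μ̄ + Δ⁺ ≤ N. Then α⁺ is nonincreasing on I and α⁻ is nondecreasing on I; consequently, for all y, x ∈ I with y < x, α⁺(y) + α⁻(x) ≥ α⁺(x) + α⁻(y). -/
/-- On the interval `I = [μ̄ - Δ⁻, μ̄ + Δ⁺]`, `α⁺` is nonincreasing and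
`α⁻` is nondecreasing; consequently, for all `y, x ∈ I` with `y < x`,
`α⁺(y) + α⁻(x) ≥ α⁺(x) + α⁻(y)`. -/
theorem metropolis_acceptance_monotonicity
    (N : ℕ) (hN : 1 ≤ N) (p : ℝ) (hp0 : 0 < p) (hp1 : p < 1)
    (μbar Δm Δp : ℕ)
    (hμbar : μbar =
      if (N : ℝ) * p - ⌊(N : ℝ) * p⌋₊ ≤ 1 - p then ⌊(N : ℝ) * p⌋₊ else ⌈(N : ℝ) * p⌉₊)
    (hΔm : Δm ≤ μbar) (hΔp : μbar + Δp ≤ N) :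
    (∀ j k : ℕ, μbar - Δm ≤ j → j ≤ μbar + Δp → μbar - Δm ≤ k → k ≤ μbar + Δp → j ≤ k →
        alphaPlus N p μbar Δp k ≤ alphaPlus N p μbar Δp j ∧
          alphaMinus N p μbar Δm j ≤ alphaMinus N p μbar Δm k) ∧
    (∀ y x : ℕ, μbar - Δm ≤ y → y ≤ μbar + Δp → μbar - Δm ≤ x → x ≤ μbar + Δp → y < x →
        alphaPlus N p μbar Δp x + alphaMinus N p μbar Δm y ≤
          alphaPlus N p μbar Δp y + alphaMinus N p μbar Δm x) := by
  have h1p : 0 < 1 - p := by linarith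
  have hm0 : 0 ≤ (N : ℝ) * p := by positivity
  have hμN : μbar ≤ N := le_trans (Nat.le_add_right _ _) hΔp
  have hμNR : (μbar : ℝ) ≤ N := by exact_mod_cast hμN
  have hA : (N : ℝ) * p + p - 1 ≤ μbar := by
    rw [hμbar]
    split_ifs with h
    · linarith
    · have h2 := Nat.le_ceil ((N : ℝ) * p)
      linarith
  have hB : (μbar : ℝ) ≤ (N : ℝ) * p + p := by
    rw [hμbar]
    split_ifs with h
    · have h2 := Nat.floor_le hm0
      linarith
    · push_neg at h
      have h2 : (⌈(N : ℝ) * p⌉₊ : ℝ) ≤ (⌊(N : ℝ) * p⌋₊ : ℝ) + 1 := by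
        exact_mod_cast Nat.ceil_le_floor_add_one _
      linarith
  -- facts about the middle branch of alphaPlus
  have hPnn : ∀ k : ℕ, k < μbar + Δp →
      0 ≤ ((N : ℝ) - k) / ((k : ℝ) + 1) * (p / (1 - p)) := by
    intro k hk
    have hkN : (k : ℝ) ≤ N := by exact_mod_cast le_trans (le_of_lt hk) hΔp
    have h0 : (0:ℝ) ≤ (N : ℝ) - k := by linarith
    have h1 : (0:ℝ) < (k : ℝ) + 1 := by positivity
    positivity
  have hPle1 : ∀ k : ℕ, μbar ≤ k →
      ((N : ℝ) - k) / ((k : ℝ) + 1) * (p / (1 - p)) ≤ 1 := by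
    intro k hk
    have hkR : (μbar : ℝ) ≤ k := by exact_mod_cast hk
    rw [div_mul_div_comm, div_le_one (by positivity)]
    nlinarith [hA, hkR]
  have hPmono : ∀ j k : ℕ, j ≤ k → k < μbar + Δp →
      ((N : ℝ) - k) / ((k : ℝ) + 1) * (p / (1 - p)) ≤
        ((N : ℝ) - j) / ((j : ℝ) + 1) * (p / (1 - p)) := by
    intro j k hjk hk
    have hkN : (k : ℝ) ≤ N := by exact_mod_cast le_trans (le_of_lt hk) hΔp
    have hjkR : (j : ℝ) ≤ k := by exact_mod_cast hjk
    have hj1 : (0:ℝ) < (j : ℝ) + 1 := by positivity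
    have hk1 : (0:ℝ) < (k : ℝ) + 1 := by positivity
    have hpp : (0:ℝ) ≤ p / (1 - p) := by positivity
    apply mul_le_mul_of_nonneg_right _ hpp
    rw [div_le_div_iff₀ hk1 hj1]
    nlinarith [mul_nonneg (show (0:ℝ) ≤ (N:ℝ) + 1 by positivity)
      (sub_nonneg.mpr hjkR)]
  -- facts about the middle branch of alphaMinus
  have hMnn : ∀ k : ℕ, k ≤ μbar →
      0 ≤ (k : ℝ) / ((N : ℝ) - k + 1) * ((1 - p) / p) := by
    intro k hk
    have hkN : (k : ℝ) ≤ N := by exact_mod_cast le_trans hk hμN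
    have h0 : (0:ℝ) < (N : ℝ) - k + 1 := by linarith
    positivity
  have hMle1 : ∀ k : ℕ, k ≤ μbar →
      (k : ℝ) / ((N : ℝ) - k + 1) * ((1 - p) / p) ≤ 1 := by
    intro k hk
    have hkR : (k : ℝ) ≤ μbar := by exact_mod_cast hk
    have hkN : (k : ℝ) ≤ N := le_trans hkR hμNR
    have h0 : (0:ℝ) < (N : ℝ) - k + 1 := by linarith
    rw [div_mul_div_comm, div_le_one (by positivity)]
    nlinarith [hB, hkR]
  have hMmono : ∀ j k : ℕ, j ≤ k → k ≤ μbar →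
      (j : ℝ) / ((N : ℝ) - j + 1) * ((1 - p) / p) ≤
        (k : ℝ) / ((N : ℝ) - k + 1) * ((1 - p) / p) := by
    intro j k hjk hk
    have hkN : (k : ℝ) ≤ N := by exact_mod_cast le_trans hk hμN
    have hjkR : (j : ℝ) ≤ k := by exact_mod_cast hjk
    have hj1 : (0:ℝ) < (N : ℝ) - j + 1 := by linarith
    have hk1 : (0:ℝ) < (N : ℝ) - k + 1 := by linarith
    have hpp : (0:ℝ) ≤ (1 - p) / p := by positivity
    apply mul_le_mul_of_nonneg_right _ hpp
    rw [div_le_div_iff₀ hj1 hk1]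
    nlinarith [mul_nonneg (show (0:ℝ) ≤ (N:ℝ) + 1 by positivity)
      (sub_nonneg.mpr hjkR)]
  have key : ∀ j k : ℕ, μbar - Δm ≤ j → j ≤ μbar + Δp → μbar - Δm ≤ k → k ≤ μbar + Δp →
      j ≤ k →
      alphaPlus N p μbar Δp k ≤ alphaPlus N p μbar Δp j ∧
        alphaMinus N p μbar Δm j ≤ alphaMinus N p μbar Δm k := by
    intro j k hj1 hj2 hk1 hk2 hjk
    constructor
    · unfold alphaPlus
      split_ifs <;>
        first
          | omega
          | (apply hPle1; omega)
          | (apply hPmono j k hjk; omega)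
          | (apply hPnn; omega)
          | norm_num
    · unfold alphaMinus
      split_ifs <;>
        first
          | omega
          | (apply hMle1; omega)
          | (apply hMmono j k hjk; omega)
          | (apply hMnn; omega)
          | norm_num
  constructor
  · exact key
  · intro y x hy1 hy2 hx1 hx2 hyx
    obtain ⟨h1, h2⟩ := key y x hy1 hy2 hx1 hx2 (le_of_lt hyx)
    linarith
end

section
/- Let n, d ≥ 1 be integers and let w_1, …, w_n ∈ ℝ^d be vectors all of whose coordinates are nonnegative. Then ∑_{u=1}^n ∑_{v=1}^n ⟨w_u, w_v⟩ ≥ (1/d) · ∑_{u=1}^n ∑_{v=1}^n ‖w_u‖·‖w_v‖, where ⟨·,·⟩ is the standard inner product on ℝ^d and ‖·‖ the Euclidean norm. -/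
/-!
With `S = ∑ u, w u` the right-hand side is `‖S‖ ^ 2`. Nonnegative coordinates give
`‖w u‖ ≤ ∑ k, w u k` (the ℓ² norm is at most the ℓ¹ norm), hence `∑ u, ‖w u‖ ≤ ∑ k, S k`,
and Cauchy–Schwarz against the all-ones vector bounds `(∑ k, S k) ^ 2` by `d * ‖S‖ ^ 2`.
-/

open scoped RealInnerProductSpace
open Finset

lemma sum_sum_inner_eq_norm_sum_sq {ι E : Type*} [NormedAddCommGroup E] [InnerProductSpace ℝ E]
    (s : Finset ι) (w : ι → E) :
    ∑ u ∈ s, ∑ v ∈ s, ⟪w u, w v⟫ = ‖∑ u ∈ s, w u‖ ^ 2 := by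
  simp_rw [← real_inner_self_eq_norm_sq, sum_inner, inner_sum]

namespace EuclideanSpace

variable {ι : Type*} [Fintype ι]

lemma norm_le_sum_of_nonneg {x : EuclideanSpace ℝ ι} (hx : ∀ k, 0 ≤ x k) : ‖x‖ ≤ ∑ k, x k := by
  rw [EuclideanSpace.norm_eq, Real.sqrt_le_left (sum_nonneg fun k _ => hx k)]
  simpa only [Real.norm_eq_abs, sq_abs] using sum_sq_le_sq_sum_of_nonneg fun k _ => hx k

lemma sq_sum_le_card_mul_norm_sq (x : EuclideanSpace ℝ ι) :
    (∑ k, x k) ^ 2 ≤ Fintype.card ι * ‖x‖ ^ 2 := by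
  rw [EuclideanSpace.norm_sq_eq]
  simpa only [Real.norm_eq_abs, sq_abs, card_univ] using
    sq_sum_le_card_mul_sum_sq (s := univ) (f := fun k => x k)

end EuclideanSpace

theorem sum_inner_ge_inv_dim_mul_sum_norm_general
    (n d : ℕ)
    (w : Fin n → EuclideanSpace ℝ (Fin d)) (hw : ∀ u k, 0 ≤ w u k) :
    (1 / (d : ℝ)) * ∑ u, ∑ v, ‖w u‖ * ‖w v‖ ≤ ∑ u, ∑ v, ⟪w u, w v⟫ := by
  set S := ∑ u, w u
  have hS : ∀ k, S k = ∑ u, w u k := fun k => by simp [S]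
  have h_l1 : ∑ u, ‖w u‖ ≤ ∑ k, S k := calc
    ∑ u, ‖w u‖ ≤ ∑ u, ∑ k, w u k := sum_le_sum fun u _ => EuclideanSpace.norm_le_sum_of_nonneg (hw u)
    _ = ∑ k, S k := by simp_rw [hS]; exact sum_comm
  have h_sq : (∑ u, ‖w u‖) ^ 2 ≤ d * ‖S‖ ^ 2 := calc
    (∑ u, ‖w u‖) ^ 2 ≤ (∑ k, S k) ^ 2 := by gcongr
    _ ≤ d * ‖S‖ ^ 2 := by simpa using EuclideanSpace.sq_sum_le_card_mul_norm_sq S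
  rw [sum_sum_inner_eq_norm_sum_sq, ← sum_mul_sum, ← sq]
  rcases d.eq_zero_or_pos with rfl | hd
  · simp -- `1 / 0 = 0`
  · rw [one_div, inv_mul_le_iff₀ (by exact_mod_cast hd)]
    exact h_sq

/-- Let `n, d ≥ 1` and let `w_1, …, w_n ∈ ℝ^d` have nonnegative
coordinates. Then `∑_u ∑_v ⟨w_u, w_v⟩ ≥ (1/d)·∑_u ∑_v ‖w_u‖·‖w_v‖` for the standard
inner product and Euclidean norm on `ℝ^d`. -/
theorem sum_inner_ge_inv_dim_mul_sum_norm
    (n d : ℕ) (hn : 1 ≤ n) (hd : 1 ≤ d)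
    (w : Fin n → EuclideanSpace ℝ (Fin d)) (hw : ∀ u k, 0 ≤ w u k) :
    (1 / (d : ℝ)) * ∑ u, ∑ v, ‖w u‖ * ‖w v‖ ≤ ∑ u, ∑ v, ⟪w u, w v⟫ :=
  sum_inner_ge_inv_dim_mul_sum_norm_general n d w hw
end
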